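/- arXiv:1811.11166 — 6 statements merged into one kernel-verified Lean document; each statement's English description precedes it below -/
import Mathlib

section
/- Let T be a local O-algebra, finite and flat as an O-module, with T_K semisimple, and let λ : T → O be a surjective O-algebra homomorphism. Then the congruence ideal η_λ := λ(Ann_T(Ker λ)) is the exact denominator of the idempotent e_λ in T: for x ∈ O, one has x·e_λ ∈ T (inside T_K) if and only if x ∈ η_λ; equivalently, η_λ = T ∩ e_λ·T_K viewed as an ideal of O. -/
open nonZeroDivisors

/-- For a surjective `O`-algebra homomorphism `λ : T → O`, the congruence ideal
`η_λ = λ(Ann_T(Ker λ))`. -/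
noncomputable def congIdeal {O T : Type} [CommRing O] [CommRing T] [Algebra O T]
    (lam : T →ₐ[O] O) : Ideal O :=
  Ideal.map lam.toRingHom (Submodule.annihilator (RingHom.ker lam.toRingHom))

theorem statement1
    (O : Type) [CommRing O] [IsDomain O] [IsDiscreteValuationRing O] [CharZero O]
    (K : Type) [Field K] [Algebra O K] [IsFractionRing O K]
    (T : Type) [CommRing T] [IsLocalRing T] [Algebra O T]
    [Module.Finite O T] [Module.Flat O T]
    (TK : Type) [CommRing TK] [Algebra T TK] [Algebra O TK] [Algebra K TK]
    [IsScalarTower O T TK] [IsScalarTower O K TK]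
    [IsLocalization (Algebra.algebraMapSubmonoid T O⁰) TK]
    [IsSemisimpleRing TK]
    (lam : T →ₐ[O] O) (hlam : Function.Surjective lam)
    (lamK : TK →+* K) (hlamK : ∀ t : T, lamK (algebraMap T TK t) = algebraMap O K (lam t))
    (e : TK) (he : IsIdempotentElem e) (he1 : lamK e = 1)
    (he2 : ∀ y ∈ RingHom.ker lamK, e * y = 0) :
    ∀ x : O, algebraMap O TK x * e ∈ Set.range (algebraMap T TK) ↔ x ∈ congIdeal lam := by
  have hOK : Function.Injective (algebraMap O K) := IsFractionRing.injective O K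
  haveI : Module.FinitePresentation O T := Module.finitePresentation_of_finite O T
  haveI : Module.Free O T := Module.free_of_flat_of_isLocalRing
  haveI : NoZeroSMulDivisors O T :=
    noZeroSMulDivisors_iff_right_eq_zero_of_smul.mpr fun _ hr _ h => (smul_eq_zero_iff_right hr).mp h
  have hM : Algebra.algebraMapSubmonoid T O⁰ ≤ T⁰ := by
    rintro _ ⟨o, ho, rfl⟩
    rw [mem_nonZeroDivisors_iff_right]
    intro z hz
    have h0 : o • z = 0 := by
      rw [Algebra.smul_def, mul_comm]; exact hz
    rcases smul_eq_zero.mp h0 with h | h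
    · exact absurd h (nonZeroDivisors.ne_zero ho)
    · exact h
  have hf : Function.Injective (algebraMap T TK) := IsLocalization.injective TK hM
  -- value of lamK on images of O
  have hOTK : ∀ a : O, lamK (algebraMap O TK a) = algebraMap O K a := by
    intro a
    rw [IsScalarTower.algebraMap_apply O T TK, hlamK, lam.commutes]
    simp
  intro x
  constructor
  · rintro ⟨t, ht⟩
    have hlx : lam t = x := by
      apply hOK
      rw [← hlamK t, ht, map_mul, he1, mul_one, hOTK]
    have hann : t ∈ Submodule.annihilator (RingHom.ker lam.toRingHom) := by
      rw [Submodule.mem_annihilator]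
      intro u hu
      apply hf
      rw [smul_eq_mul, map_mul, map_zero, ht]
      have hu' : e * algebraMap T TK u = 0 := by
        apply he2
        rw [RingHom.mem_ker, hlamK, show lam u = 0 from hu, map_zero]
      rw [mul_assoc, mul_comm e, mul_comm (algebraMap T TK u) e, hu', mul_zero]
    rw [congIdeal, Ideal.mem_map_iff_of_surjective lam.toRingHom hlam]
    exact ⟨t, hann, hlx⟩
  · intro hx
    rw [congIdeal, Ideal.mem_map_iff_of_surjective lam.toRingHom hlam] at hx
    obtain ⟨t, htann, hlt⟩ := hx
    refine ⟨t, ?_⟩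
    -- t kills the kernel of lamK
    have hkill : ∀ y ∈ RingHom.ker lamK, algebraMap T TK t * y = 0 := by
      intro y hy
      obtain ⟨⟨t₁, s⟩, hs⟩ := IsLocalization.surj (Algebra.algebraMapSubmonoid T O⁰) y
      have h1 : lam t₁ = 0 := by
        apply hOK
        rw [map_zero, ← hlamK, ← hs, map_mul, RingHom.mem_ker.mp hy, zero_mul]
      have h2 : t * t₁ = 0 := by
        have := Submodule.mem_annihilator.mp htann t₁ (RingHom.mem_ker.mpr h1)
        rwa [smul_eq_mul] at this
      have hu : IsUnit (algebraMap T TK (s : T)) := IsLocalization.map_units TK s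
      have h3 : (algebraMap T TK t * y) * algebraMap T TK (s : T) = 0 := by
        rw [mul_assoc, hs, ← map_mul, h2, map_zero]
      exact (IsUnit.mul_left_eq_zero hu).mp h3
    have h1me : (1 : TK) - e ∈ RingHom.ker lamK := by
      rw [RingHom.mem_ker, map_sub, map_one, he1, sub_self]
    have hte : algebraMap T TK t * e = algebraMap T TK t := by
      have := hkill _ h1me
      rw [mul_sub, mul_one, sub_eq_zero] at this
      exact this.symm
    -- e kills the difference between x and t
    have hdiff : e * (algebraMap O TK x - algebraMap T TK t) = 0 := by
      have hker : lam (algebraMap O T x - t) = 0 := by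
        rw [map_sub, lam.commutes, show lam t = x from hlt]
        simp
      have := he2 (algebraMap T TK (algebraMap O T x - t)) (by
        rw [RingHom.mem_ker, hlamK, hker, map_zero])
      rwa [map_sub, ← IsScalarTower.algebraMap_apply O T TK] at this
    rw [mul_sub] at hdiff
    rw [sub_eq_zero] at hdiff
    rw [mul_comm, hdiff, mul_comm, hte]
end

section
/- Let T be a local O-algebra, finite and flat as an O-module, with T_K semisimple, and assume T is Gorenstein, i.e., there is a T-linear isomorphism ξ : Hom_O(T,O) ≅ T. Let λ : T → O be a surjective O-algebra homomorphism and set λ^∨ := ξ(λ) ∈ T. Then the congruence ideal η_λ := λ(Ann_T(Ker λ)) equals the principal ideal (λ(λ^∨)) of O. -/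
open nonZeroDivisors

theorem statement5
    (O : Type) [CommRing O] [IsDomain O] [IsDiscreteValuationRing O] [CharZero O]
    (K : Type) [Field K] [Algebra O K] [IsFractionRing O K]
    (T : Type) [CommRing T] [IsLocalRing T] [Algebra O T]
    [Module.Finite O T] [Module.Flat O T]
    (TK : Type) [CommRing TK] [Algebra T TK] [Algebra O TK] [Algebra K TK]
    [IsScalarTower O T TK] [IsScalarTower O K TK]
    [IsLocalization (Algebra.algebraMapSubmonoid T O⁰) TK]
    [IsSemisimpleRing TK]
    -- `T` is Gorenstein: `ξ : Hom_O(T,O) ≅ T` is a `T`-linear isomorphism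
    (ξ : (T →ₗ[O] O) ≃ₗ[O] T)
    (hξ : ∀ (t : T) (φ : T →ₗ[O] O), ξ (φ.comp (LinearMap.mulLeft O t)) = t * ξ φ)
    (lam : T →ₐ[O] O) (hlam : Function.Surjective lam) :
    congIdeal lam = Ideal.span {lam (ξ lam.toLinearMap)} := by
  unfold congIdeal
  apply le_antisymm
  · rw [Ideal.map_le_iff_le_comap]
    intro t ht
    rw [Submodule.mem_annihilator] at ht
    simp only [Ideal.mem_comap, Ideal.mem_span_singleton]
    set φ := ξ.symm t with hφ
    have hφI : ∀ i ∈ RingHom.ker lam.toRingHom, φ i = 0 := by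
      intro i hi
      have h1 : ξ (φ.comp (LinearMap.mulLeft O i)) = i * t := by
        rw [hξ, ξ.apply_symm_apply]
      have h2 : i * t = 0 := by rw [mul_comm]; exact ht i hi
      have h3 : φ.comp (LinearMap.mulLeft O i) = 0 := by
        apply ξ.injective; rw [h1, h2, map_zero]
      have := LinearMap.congr_fun h3 1
      simpa using this
    have key : φ = φ 1 • lam.toLinearMap := by
      ext x
      have hx : x - (algebraMap O T) (lam x) ∈ RingHom.ker lam.toRingHom := by
        simp [RingHom.mem_ker]
      have hh := hφI _ hx
      have halg : (algebraMap O T) (lam x) = (lam x) • (1 : T) := by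
        rw [Algebra.algebraMap_eq_smul_one]
      rw [map_sub, sub_eq_zero, halg, map_smul] at hh
      simp only [LinearMap.smul_apply, AlgHom.toLinearMap_apply, smul_eq_mul]
      rw [hh, smul_eq_mul, mul_comm]
    have ht' : t = φ 1 • ξ lam.toLinearMap := by
      rw [← map_smul, ← key, hφ, ξ.apply_symm_apply]
    refine ⟨φ 1, ?_⟩
    rw [ht']
    show lam (φ 1 • ξ lam.toLinearMap) = _
    rw [map_smul]
    simp [Algebra.smul_def, mul_comm]
  · rw [Ideal.span_le]
    intro x hx
    simp only [Set.mem_singleton_iff] at hx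
    subst hx
    apply Ideal.mem_map_of_mem
    rw [Submodule.mem_annihilator]
    intro i hi
    have h1 : lam.toLinearMap.comp (LinearMap.mulLeft O i) = 0 := by
      ext x
      simp only [LinearMap.comp_apply, LinearMap.mulLeft_apply, LinearMap.zero_apply,
        AlgHom.toLinearMap_apply, map_mul]
      rw [RingHom.mem_ker] at hi
      simp only [AlgHom.toRingHom_eq_coe, RingHom.coe_coe] at hi
      simp [hi]
    have h2 := hξ i lam.toLinearMap
    rw [h1, map_zero] at h2
    rw [smul_eq_mul, mul_comm]
    exact h2.symm
end

section
/- Let θ : T' → T be a surjective O-algebra homomorphism between local O-algebras, finite flat over O with T_K and T'_K semisimple, and assume both T and T' are Gorenstein. Let λ : T → O be a surjective O-algebra homomorphism and λ' := λ∘θ. Then η_{λ'} = η_λ·η^♯_λ as ideals of O, where η_λ := λ(Ann_T(Ker λ)), η_{λ'} := λ'(Ann_{T'}(Ker λ')), and η^♯_λ := λ'(Ann_{T'}(Ker θ)). -/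
open nonZeroDivisors

/-- A finite flat `O`-algebra `A` is Gorenstein if `Hom_O(A,O)` is isomorphic to `A`
as an `A`-module (the `A`-module structure on `Hom_O(A,O)` being `(a·φ)(x) = φ(a·x)`). -/
def IsGorensteinAlgebra (O A : Type) [CommRing O] [CommRing A] [Algebra O A] : Prop :=
  ∃ ξ : (A →ₗ[O] O) ≃ₗ[O] A,
    ∀ (a : A) (φ : A →ₗ[O] O), ξ (φ.comp (LinearMap.mulLeft O a)) = a * ξ φ

open scoped TensorProduct in
/-- A flat module over a domain has no zero smul divisors. -/
lemma aux_flat_nzsd (O A : Type) [CommRing O] [IsDomain O] [CommRing A] [Algebra O A]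
    [Module.Flat O A] : NoZeroSMulDivisors O A := by
  refine ⟨fun {c x} h => ?_⟩
  by_cases hc : c = 0
  · exact Or.inl hc
  refine Or.inr ?_
  have hreg : IsSMulRegular O c := fun a b hab => by
    exact mul_left_cancel₀ hc (by simpa [smul_eq_mul] using hab)
  have hA : IsSMulRegular (A ⊗[O] O) c := hreg.lTensor (M := A)
  let e := TensorProduct.rid O A
  have hA' : IsSMulRegular A c :=
    (Equiv.isSMulRegular_congr (e := e.toEquiv) (fun y => e.map_smul c y)).mp hA
  exact hA' (show c • x = c • 0 by simpa using h)

section Aux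

variable {O : Type} [CommRing O] {A : Type} [CommRing A] [Algebra O A]

lemma aux_dual_sep [Module.Free O A] {v : A}
    (h : ∀ φ : A →ₗ[O] O, φ v = 0) : v = 0 := by
  let b := Module.Free.chooseBasis O A
  exact b.forall_coord_eq_zero_iff.mp fun i => h (b.coord i)

lemma aux_swap (ξ : (A →ₗ[O] O) ≃ₗ[O] A)
    (hξ : ∀ (a : A) (φ : A →ₗ[O] O), ξ (φ.comp (LinearMap.mulLeft O a)) = a * ξ φ)
    (φ : A →ₗ[O] O) (y k : A) : φ (y * k) = ξ.symm (y * ξ φ) k := by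
  have h : ξ.symm (y * ξ φ) = φ.comp (LinearMap.mulLeft O y) := by
    rw [← hξ y φ, ξ.symm_apply_apply]
  rw [h]
  simp

/-- `ξ (g ∘ θ)` annihilates the kernel of `θ`. -/
lemma aux_ann_of {C : Type} [CommRing C] [Algebra O C] [Module.Free O A]
    (ξ : (A →ₗ[O] O) ≃ₗ[O] A)
    (hξ : ∀ (a : A) (φ : A →ₗ[O] O), ξ (φ.comp (LinearMap.mulLeft O a)) = a * ξ φ)
    (θ : A →ₐ[O] C) (g : C →ₗ[O] O) {k : A} (hk : θ k = 0) :
    ξ (g ∘ₗ θ.toLinearMap) * k = 0 := by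
  apply aux_dual_sep (O := O)
  intro φ
  rw [aux_swap ξ hξ φ _ k]
  rw [mul_comm, ← hξ (ξ φ) (g ∘ₗ θ.toLinearMap), ξ.symm_apply_apply]
  simp [LinearMap.comp_apply, LinearMap.mulLeft_apply, map_mul, hk]

end Aux

lemma aux_theta_dag {O T T' : Type} [CommRing O] [CommRing T] [Algebra O T]
    [CommRing T'] [Algebra O T']
    (ξ : (T →ₗ[O] O) ≃ₗ[O] T)
    (hξ : ∀ (a : T) (φ : T →ₗ[O] O), ξ (φ.comp (LinearMap.mulLeft O a)) = a * ξ φ)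
    (ξ' : (T' →ₗ[O] O) ≃ₗ[O] T')
    (hξ' : ∀ (a : T') (φ : T' →ₗ[O] O), ξ' (φ.comp (LinearMap.mulLeft O a)) = a * ξ' φ)
    (θ : T' →ₐ[O] T) (b : T') :
    ξ' ((ξ.symm (θ b)) ∘ₗ θ.toLinearMap)
      = b * ξ' ((ξ.symm 1) ∘ₗ θ.toLinearMap) := by
  rw [← hξ' b ((ξ.symm 1) ∘ₗ θ.toLinearMap)]
  congr 1
  have h2 : ξ.symm (θ b) = (ξ.symm 1).comp (LinearMap.mulLeft O (θ b)) := by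
    apply ξ.injective
    rw [ξ.apply_symm_apply, hξ, ξ.apply_symm_apply, mul_one]
  apply LinearMap.ext
  intro x
  rw [h2]
  simp [map_mul]

theorem aux_key
    (O : Type) [CommRing O] [IsDomain O] [IsDiscreteValuationRing O]
    (K : Type) [Field K] [Algebra O K] [IsFractionRing O K]
    (A : Type) [CommRing A] [Algebra O A]
    [Module.Finite O A] [Module.Flat O A]
    (AK : Type) [CommRing AK] [Algebra A AK] [Algebra O AK] [Algebra K AK]
    [IsScalarTower O A AK] [IsScalarTower O K AK]
    [IsLocalization (Algebra.algebraMapSubmonoid A O⁰) AK]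
    [IsSemisimpleRing AK]
    (ξ : (A →ₗ[O] O) ≃ₗ[O] A)
    (hξ : ∀ (a : A) (φ : A →ₗ[O] O), ξ (φ.comp (LinearMap.mulLeft O a)) = a * ξ φ)
    (lam : A →ₐ[O] O) (hlam : Function.Surjective lam) :
    Ideal.map lam.toRingHom (Submodule.annihilator (RingHom.ker lam.toRingHom)) =
      Ideal.span {lam (ξ lam.toLinearMap)} := by
  haveI : NoZeroSMulDivisors O A := aux_flat_nzsd O A
  haveI : Module.Free O A := Module.free_of_finite_type_torsion_free'
  set ω := ξ lam.toLinearMap with hωdef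
  have hωk : ∀ k : A, lam k = 0 → ω * k = 0 := by
    intro k hk
    have h := aux_ann_of ξ hξ lam LinearMap.id (k := k) hk
    simpa using h
  -- localization setup
  have hMle : Algebra.algebraMapSubmonoid A O⁰ ≤ A⁰ := by
    rintro _ ⟨c, hc, rfl⟩
    rw [mem_nonZeroDivisors_iff_right]
    intro z hz
    have hcz : c • z = 0 := by rw [Algebra.smul_def, mul_comm]; exact hz
    rcases smul_eq_zero.mp hcz with h | h
    · exact absurd h (mem_nonZeroDivisors_iff_ne_zero.mp hc)
    · exact h
  have hinj : Function.Injective (algebraMap A AK) := IsLocalization.injective AK hMle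
  have hunit : ∀ y : (Algebra.algebraMapSubmonoid A O⁰),
      IsUnit (((algebraMap O K).comp lam.toRingHom) y) := by
    rintro ⟨_, c, hc, rfl⟩
    simp only [RingHom.comp_apply]
    rw [show lam.toRingHom (algebraMap O A c) = c from lam.commutes c]
    exact isUnit_iff_ne_zero.mpr fun h =>
      mem_nonZeroDivisors_iff_ne_zero.mp hc
        (IsFractionRing.injective O K (by rw [h, map_zero]))
  set lamK := IsLocalization.lift (M := Algebra.algebraMapSubmonoid A O⁰) (S := AK) hunit
    with hlamKdef
  have hlamK : ∀ x : A, lamK (algebraMap A AK x) = algebraMap O K (lam x) := fun x =>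
    IsLocalization.lift_eq hunit x
  -- idempotent from semisimplicity
  obtain ⟨M, hM⟩ := exists_isCompl (RingHom.ker lamK : Ideal AK)
  have hone : (1 : AK) ∈ RingHom.ker lamK ⊔ M := by rw [hM.sup_eq_top]; exact Submodule.mem_top
  obtain ⟨f, hf, e, heM, hfe⟩ := Submodule.mem_sup.mp hone
  have heOne : lamK e = 1 := by
    have h := congrArg lamK hfe
    rw [map_add, RingHom.mem_ker.mp hf, zero_add, map_one] at h
    exact h
  have hek : ∀ z ∈ RingHom.ker lamK, e * z = 0 := by
    intro z hz
    have h1 : e * z ∈ M := by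
      have h := M.smul_mem z heM
      rw [smul_eq_mul] at h
      rw [mul_comm]; exact h
    have h2 : e * z ∈ RingHom.ker lamK := by
      rw [RingHom.mem_ker, map_mul, RingHom.mem_ker.mp hz, mul_zero]
    exact Submodule.disjoint_def.mp hM.disjoint _ h2 h1
  have he2 : e * e = e := by
    have h0 : e * f = 0 := hek f hf
    have h : (f + e) * e = e := by rw [hfe, one_mul]
    rw [add_mul, mul_comm f e, h0, zero_add] at h
    exact h
  -- mapping annihilator elements into AK
  have hloc : ∀ y : A, (∀ k : A, lam k = 0 → y * k = 0) →
      ∀ z ∈ RingHom.ker lamK, algebraMap A AK y * z = 0 := by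
    intro y hy z hz
    obtain ⟨⟨x, s⟩, hxs⟩ := IsLocalization.surj (Algebra.algebraMapSubmonoid A O⁰) z
    have hlamx : lam x = 0 := by
      have h := congrArg lamK hxs
      rw [map_mul, RingHom.mem_ker.mp hz, zero_mul, hlamK] at h
      exact IsFractionRing.injective O K (by rw [← h, map_zero])
    have hkey : (algebraMap A AK y * z) * algebraMap A AK (s : A) = 0 := by
      rw [mul_assoc, hxs, ← map_mul, hy x hlamx, map_zero]
    exact (IsUnit.mul_left_eq_zero (IsLocalization.map_units AK s)).mp hkey
  -- the star identity
  have hstar : ∀ y : A, (∀ k : A, lam k = 0 → y * k = 0) →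
      algebraMap A AK y = lam y • e := by
    intro y hy
    have h1 : (1 : AK) - e ∈ RingHom.ker lamK := by
      rw [RingHom.mem_ker, map_sub, map_one, heOne, sub_self]
    have hye : algebraMap A AK y = algebraMap A AK y * e := by
      have h := hloc y hy _ h1
      rw [mul_sub, mul_one, sub_eq_zero] at h
      exact h
    have hsm : (lam y : O) • e = algebraMap A AK (algebraMap O A (lam y)) * e := by
      rw [← IsScalarTower.algebraMap_apply, ← Algebra.smul_def]
    have hk : algebraMap A AK y - lam y • e ∈ RingHom.ker lamK := by
      rw [RingHom.mem_ker, map_sub, hlamK, hsm, map_mul, hlamK, heOne, mul_one,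
        lam.commutes]
      simp
    have hke := hek _ hk
    rw [mul_sub, sub_eq_zero] at hke
    rw [hye, mul_comm, hke, mul_smul_comm, he2]
  have haA : ∀ y : A, (∀ k : A, lam k = 0 → y * k = 0) → lam ω • y = lam y • ω := by
    intro y hy
    apply hinj
    have hmap : ∀ (c : O) (x : A), algebraMap A AK (c • x) = c • algebraMap A AK x := by
      intro c x
      rw [Algebra.smul_def, Algebra.smul_def, map_mul, ← IsScalarTower.algebraMap_apply]
    rw [hmap, hmap, hstar y hy, hstar ω hωk, smul_smul, smul_smul, mul_comm]
  -- conclude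
  apply le_antisymm
  · rw [Ideal.map_le_iff_le_comap]
    intro a ha
    have hann : ∀ k : A, lam k = 0 → a * k = 0 := by
      intro k hk
      have h := Submodule.mem_annihilator.mp ha k (RingHom.mem_ker.mpr hk)
      rwa [smul_eq_mul] at h
    have hmain := haA a hann
    show lam.toRingHom a ∈ Ideal.span {lam ω}
    rcases ValuationRing.dvd_total (lam ω) (lam a) with hdvd | ⟨d, hd⟩
    · exact Ideal.mem_span_singleton.mpr hdvd
    · by_cases h0 : lam a = 0
      · show lam a ∈ Ideal.span {lam ω}
        rw [h0]; exact Ideal.zero_mem _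
      · have hda : d • a = ω := by
          have hz : lam a • (d • a - ω) = 0 := by
            rw [smul_sub, smul_smul, ← hd, hmain, sub_self]
          rcases smul_eq_zero.mp hz with h | h
          · exact absurd h h0
          · exact sub_eq_zero.mp h
        have hlin : lam.toLinearMap = d • ξ.symm a := by
          have h : ξ.symm ω = lam.toLinearMap := ξ.symm_apply_apply _
          rw [← h, ← hda, map_smul]
        obtain ⟨x₀, hx₀⟩ := hlam 1
        have hdu : IsUnit d := by
          have h1 : (1 : O) = d * (ξ.symm a x₀) := by
            rw [← hx₀]
            show lam.toLinearMap x₀ = _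
            rw [hlin, LinearMap.smul_apply, smul_eq_mul]
          exact IsUnit.of_mul_eq_one (a := d) _ h1.symm
        obtain ⟨u, hu⟩ := hdu
        refine Ideal.mem_span_singleton.mpr ⟨(↑u⁻¹ : Oˣ), ?_⟩
        show lam a = lam ω * ↑u⁻¹
        rw [hd, ← hu]
        exact (Units.mul_inv_cancel_right _ _).symm
  · rw [Ideal.span_le, Set.singleton_subset_iff]
    exact Ideal.mem_map_of_mem _ (Submodule.mem_annihilator.mpr fun n hn => by
      rw [smul_eq_mul]; exact hωk n (RingHom.mem_ker.mp hn))


theorem statement8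
    (O : Type) [CommRing O] [IsDomain O] [IsDiscreteValuationRing O] [CharZero O]
    (K : Type) [Field K] [Algebra O K] [IsFractionRing O K]
    (T : Type) [CommRing T] [IsLocalRing T] [Algebra O T]
    [Module.Finite O T] [Module.Flat O T]
    (T' : Type) [CommRing T'] [IsLocalRing T'] [Algebra O T']
    [Module.Finite O T'] [Module.Flat O T']
    (TK : Type) [CommRing TK] [Algebra T TK] [Algebra O TK] [Algebra K TK]
    [IsScalarTower O T TK] [IsScalarTower O K TK]
    [IsLocalization (Algebra.algebraMapSubmonoid T O⁰) TK]
    [IsSemisimpleRing TK]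
    (T'K : Type) [CommRing T'K] [Algebra T' T'K] [Algebra O T'K] [Algebra K T'K]
    [IsScalarTower O T' T'K] [IsScalarTower O K T'K]
    [IsLocalization (Algebra.algebraMapSubmonoid T' O⁰) T'K]
    [IsSemisimpleRing T'K]
    (hGorT : IsGorensteinAlgebra O T) (hGorT' : IsGorensteinAlgebra O T')
    (θ : T' →ₐ[O] T) (hθ : Function.Surjective θ)
    (lam : T →ₐ[O] O) (hlam : Function.Surjective lam) :
    Ideal.map (lam.comp θ).toRingHom
        (Submodule.annihilator (RingHom.ker (lam.comp θ).toRingHom)) =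
      Ideal.map lam.toRingHom (Submodule.annihilator (RingHom.ker lam.toRingHom)) *
        Ideal.map (lam.comp θ).toRingHom (Submodule.annihilator (RingHom.ker θ.toRingHom)) := by
  obtain ⟨ξ, hξ⟩ := hGorT
  obtain ⟨ξ', hξ'⟩ := hGorT'
  haveI : NoZeroSMulDivisors O T := aux_flat_nzsd O T
  haveI : NoZeroSMulDivisors O T' := aux_flat_nzsd O T'
  haveI : Module.Free O T := Module.free_of_finite_type_torsion_free'
  haveI : Module.Free O T' := Module.free_of_finite_type_torsion_free'
  have hlam' : Function.Surjective (lam.comp θ) := by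
    intro x
    obtain ⟨t, ht⟩ := hlam x
    obtain ⟨t', ht'⟩ := hθ t
    exact ⟨t', by simp [ht', ht]⟩
  set δ := ξ' ((ξ.symm 1) ∘ₗ θ.toLinearMap) with hδdef
  set ω := ξ lam.toLinearMap with hωdef
  -- the annihilator of ker θ is generated by δ
  have h_ann : Submodule.annihilator (RingHom.ker θ.toRingHom) = Ideal.span {δ} := by
    apply le_antisymm
    · intro y hy
      have hy' : ∀ k : T', θ k = 0 → y * k = 0 := fun k hk => by
        have h := Submodule.mem_annihilator.mp hy k (RingHom.mem_ker.mpr hk)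
        rwa [smul_eq_mul] at h
      have hφy : ∀ k : T', θ k = 0 → (ξ'.symm y) k = 0 := by
        intro k hk
        have h := aux_swap ξ' hξ' (ξ'.symm 1) y k
        rw [hy' k hk, map_zero, ξ'.apply_symm_apply, mul_one] at h
        exact h.symm
      obtain ⟨s, hs⟩ := Module.projective_lifting_property θ.toLinearMap LinearMap.id
        (show Function.Surjective θ.toLinearMap from hθ)
      have hψθ : ((ξ'.symm y).comp s) ∘ₗ θ.toLinearMap = ξ'.symm y := by
        apply LinearMap.ext
        intro x
        have hsx : θ (s (θ x)) = θ x := by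
          have h := LinearMap.ext_iff.mp hs (θ x)
          simpa using h
        have hker : θ (s (θ x) - x) = 0 := by rw [map_sub, hsx, sub_self]
        have h0 := hφy _ hker
        rw [map_sub] at h0
        have := sub_eq_zero.mp h0
        simpa using this
      obtain ⟨b, hb⟩ := hθ (ξ ((ξ'.symm y).comp s))
      have hyb : y = b * δ := by
        have h1 : y = ξ' (((ξ'.symm y).comp s) ∘ₗ θ.toLinearMap) := by
          rw [hψθ, ξ'.apply_symm_apply]
        have h2 : (ξ'.symm y).comp s = ξ.symm (θ b) := by rw [hb, ξ.symm_apply_apply]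
        rw [h1, h2, aux_theta_dag ξ hξ ξ' hξ' θ b]
      exact Ideal.mem_span_singleton.mpr ⟨b, by rw [hyb, mul_comm]⟩
    · rw [Ideal.span_le, Set.singleton_subset_iff]
      exact Submodule.mem_annihilator.mpr fun k hk => by
        rw [smul_eq_mul]; exact aux_ann_of ξ' hξ' θ (ξ.symm 1) (RingHom.mem_ker.mp hk)
  have h1 := aux_key O K T' T'K ξ' hξ' (lam.comp θ) hlam'
  have h2 := aux_key O K T TK ξ hξ lam hlam
  have h3 : Ideal.map (lam.comp θ).toRingHom
      (Submodule.annihilator (RingHom.ker θ.toRingHom)) =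
      Ideal.span {(lam.comp θ) δ} := by
    rw [h_ann, Ideal.map_span, Set.image_singleton]
    rfl
  have h4 : (lam.comp θ) (ξ' (lam.comp θ).toLinearMap) = lam ω * (lam.comp θ) δ := by
    obtain ⟨b₀, hb₀⟩ := hθ ω
    have hξsymm : ξ.symm ω = lam.toLinearMap := ξ.symm_apply_apply _
    have hcomp : (lam.comp θ).toLinearMap = lam.toLinearMap ∘ₗ θ.toLinearMap := rfl
    have hω' : ξ' (lam.comp θ).toLinearMap = b₀ * δ := by
      rw [hcomp, ← hξsymm, ← hb₀, aux_theta_dag ξ hξ ξ' hξ' θ b₀]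
    rw [hω', map_mul]
    congr 1
    simp [hb₀]
  rw [h1, h2, h3, Ideal.span_singleton_mul_span_singleton, h4]
end

section
/- Let θ : T' → T be a surjective O-algebra homomorphism between local O-algebras, finite flat over O with T_K and T'_K semisimple, and assume both T and T' are Gorenstein. Then the T'-submodule T'_T := {x ∈ T' : e^♯·x = 0} of T' (the elements of T' lying in the factor T_K of T'_K ≅ T_K × T^♯_K) is isomorphic to T as a T-module. -/
open nonZeroDivisors
open TensorProduct

lemma aux_nzd (O A : Type) [CommRing O] [IsDomain O] [CommRing A] [Algebra O A]
    [Module.Flat O A] : Algebra.algebraMapSubmonoid A O⁰ ≤ A⁰ := by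
  rintro _ ⟨s, hs, rfl⟩
  have hs0 : s ≠ 0 := mem_nonZeroDivisors_iff_ne_zero.mp hs
  have h1 : IsSMulRegular O s := fun a b hab => by
    simpa [smul_eq_mul] using mul_left_cancel₀ hs0 (by simpa [smul_eq_mul] using hab)
  have h2 : IsSMulRegular (A ⊗[O] O) s := h1.lTensor (M := A)
  have h3 : IsSMulRegular A s := ((TensorProduct.rid O A).isSMulRegular_congr s).mp h2
  rw [mem_nonZeroDivisors_iff_right]; intro z hz
  have : s • z = 0 := by rw [Algebra.smul_def]; rw [mul_comm] at hz; exact hz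
  simpa using h3 (by simpa using this : s • z = s • (0 : A))


theorem statement9
    (O : Type) [CommRing O] [IsDomain O] [IsDiscreteValuationRing O] [CharZero O]
    (K : Type) [Field K] [Algebra O K] [IsFractionRing O K]
    (T : Type) [CommRing T] [IsLocalRing T] [Algebra O T]
    [Module.Finite O T] [Module.Flat O T]
    (T' : Type) [CommRing T'] [IsLocalRing T'] [Algebra O T']
    [Module.Finite O T'] [Module.Flat O T']
    (TK : Type) [CommRing TK] [Algebra T TK] [Algebra O TK] [Algebra K TK]
    [IsScalarTower O T TK] [IsScalarTower O K TK]
    [IsLocalization (Algebra.algebraMapSubmonoid T O⁰) TK]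
    [IsSemisimpleRing TK]
    (T'K : Type) [CommRing T'K] [Algebra T' T'K] [Algebra O T'K] [Algebra K T'K]
    [IsScalarTower O T' T'K] [IsScalarTower O K T'K]
    [IsLocalization (Algebra.algebraMapSubmonoid T' O⁰) T'K]
    [IsSemisimpleRing T'K]
    (hGorT : IsGorensteinAlgebra O T) (hGorT' : IsGorensteinAlgebra O T')
    (θ : T' →ₐ[O] T) (hθ : Function.Surjective θ)
    (θK : T'K →+* TK) (hθK : ∀ t : T', θK (algebraMap T' T'K t) = algebraMap T TK (θ t))
    -- the idempotent `e_θ` of the factor `T_K` of `T'_K ≅ T_K × T^♯_K`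
    (eθ : T'K) (heθ : IsIdempotentElem eθ) (heθ1 : θK eθ = 1)
    (heθ2 : ∀ y ∈ RingHom.ker θK, eθ * y = 0) :
    -- `T'_T = {x ∈ T' : e^♯ · x = 0}` is isomorphic to `T` as a `T`-module
    ∃ g : ↥(LinearMap.ker ((LinearMap.mulLeft T' (1 - eθ)).comp (Algebra.linearMap T' T'K)))
        ≃ₗ[O] T,
      ∀ (t : T') (x : ↥(LinearMap.ker
          ((LinearMap.mulLeft T' (1 - eθ)).comp (Algebra.linearMap T' T'K)))),
        g (t • x) = θ t * g x := by
  classical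
  obtain ⟨ξ, hξ⟩ := hGorT
  obtain ⟨ξ', hξ'⟩ := hGorT'
  set k := LinearMap.ker ((LinearMap.mulLeft T' (1 - eθ)).comp (Algebra.linearMap T' T'K))
    with hk
  have hι' : Function.Injective (algebraMap T' T'K) :=
    IsLocalization.injective T'K (aux_nzd O T')
  have hι : Function.Injective (algebraMap T TK) :=
    IsLocalization.injective TK (aux_nzd O T)
  set ι' := algebraMap T' T'K with hι'def
  -- membership in k is annihilation of ker θ
  have hmem : ∀ x : T', x ∈ k ↔ ∀ a : T', θ a = 0 → a * x = 0 := by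
    intro x
    rw [hk, LinearMap.mem_ker, LinearMap.comp_apply, Algebra.linearMap_apply,
      LinearMap.mulLeft_apply]
    constructor
    · intro h a ha
      have hx : ι' x = eθ * ι' x := by linear_combination h
      apply hι'
      have hka : eθ * ι' a = 0 := heθ2 _ (by simp [RingHom.mem_ker, hθK, ha])
      rw [map_mul, map_zero, hx]
      calc ι' a * (eθ * ι' x) = (eθ * ι' a) * ι' x := by ring
        _ = 0 := by rw [hka, zero_mul]
    · intro h
      obtain ⟨⟨t, s⟩, hts⟩ := IsLocalization.surj (Algebra.algebraMapSubmonoid T' O⁰)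
        (1 - eθ)
      have hθt : θ t = 0 := by
        apply hι
        have := congrArg θK hts
        rw [map_mul, map_sub, map_one, heθ1, sub_self, zero_mul, hθK] at this
        rw [map_zero]
        exact this.symm
      have hu : IsUnit (ι' (s : T')) :=
        IsLocalization.map_units T'K s
      have key : ((1 - eθ) * ι' x) * ι' (s : T') = 0 := by
        calc ((1 - eθ) * ι' x) * ι' (s : T') = ((1 - eθ) * ι' (s : T')) * ι' x := by ring
          _ = ι' t * ι' x := by rw [hts]
          _ = ι' (t * x) := (map_mul ι' t x).symm
          _ = 0 := by rw [h t hθt, map_zero]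
      exact hu.mul_left_cancel (by linear_combination key)
  -- the linear map H : Hom(T,O) → k
  have hmemH : ∀ ψ : T →ₗ[O] O, ξ' (ψ.comp θ.toLinearMap) ∈ k := by
    intro ψ
    rw [hmem]
    intro a ha
    rw [← hξ' a (ψ.comp θ.toLinearMap)]
    have : (ψ.comp θ.toLinearMap).comp (LinearMap.mulLeft O a) = 0 := by
      ext y
      simp [ha]
    rw [this, map_zero]
  let H : (T →ₗ[O] O) →ₗ[O] ↥k :=
    { toFun := fun ψ => ⟨ξ' (ψ.comp θ.toLinearMap), hmemH ψ⟩
      map_add' := by intro ψ χ; apply Subtype.ext; simp [LinearMap.add_comp]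
      map_smul' := by intro c ψ; apply Subtype.ext; simp [LinearMap.smul_comp] }
  have hHval : ∀ ψ : T →ₗ[O] O, (H ψ : T') = ξ' (ψ.comp θ.toLinearMap) := fun _ => rfl
  have hHinj : Function.Injective H := by
    intro ψ χ h
    have h2 : ψ.comp θ.toLinearMap = χ.comp θ.toLinearMap :=
      ξ'.injective (congrArg Subtype.val h)
    ext t
    obtain ⟨y, rfl⟩ := hθ t
    exact LinearMap.congr_fun h2 y
  have hHsurj : Function.Surjective H := by
    intro x
    set φ := ξ'.symm (x : T') with hφ
    have hker : LinearMap.ker θ.toLinearMap ≤ LinearMap.ker φ := by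
      intro y hy
      have hy' : θ y = 0 := hy
      have h0 : y * (x : T') = 0 := (hmem _).mp x.2 y hy'
      have : ξ' (φ.comp (LinearMap.mulLeft O y)) = 0 := by
        rw [hξ' y φ, hφ, LinearEquiv.apply_symm_apply, h0]
      have h1 : φ.comp (LinearMap.mulLeft O y) = 0 := by
        apply ξ'.injective; simpa using this
      have := congrArg (fun f => f (1 : T')) h1
      simpa using this
    set e := θ.toLinearMap.quotKerEquivOfSurjective hθ with he
    set ψ := ((LinearMap.ker θ.toLinearMap).liftQ φ hker).comp e.symm.toLinearMap with hψ
    refine ⟨ψ, ?_⟩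
    apply Subtype.ext
    rw [hHval]
    have hcomp : ψ.comp θ.toLinearMap = φ := by
      ext y
      have hmk : e.symm (θ y) = Submodule.Quotient.mk y := by
        apply e.injective
        rw [LinearEquiv.apply_symm_apply]
        simp [he, LinearMap.quotKerEquivOfSurjective]
      simp only [hψ, LinearMap.comp_apply, AlgHom.toLinearMap_apply, LinearEquiv.coe_coe]
      rw [hmk]
      simp
    rw [hcomp, hφ, LinearEquiv.apply_symm_apply]
  let G : (T →ₗ[O] O) ≃ₗ[O] ↥k := LinearEquiv.ofBijective H ⟨hHinj, hHsurj⟩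
  refine ⟨G.symm.trans ξ, ?_⟩
  intro t x
  obtain ⟨ψ, rfl⟩ := G.surjective x
  have hGH : ∀ χ : T →ₗ[O] O, G χ = H χ := fun _ => rfl
  have hkey : t • G ψ = G (ψ.comp (LinearMap.mulLeft O (θ t))) := by
    apply Subtype.ext
    have h1 : ((t • G ψ : ↥k) : T') = t * ((G ψ : ↥k) : T') := rfl
    have h2 : ((G ψ : ↥k) : T') = ξ' (ψ.comp θ.toLinearMap) := rfl
    have h3 : ((G (ψ.comp (LinearMap.mulLeft O (θ t))) : ↥k) : T')
        = ξ' ((ψ.comp (LinearMap.mulLeft O (θ t))).comp θ.toLinearMap) := rfl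
    rw [h1, h2, h3, ← hξ' t (ψ.comp θ.toLinearMap)]
    congr 1
    ext y
    simp [mul_comm, map_mul]
  rw [hkey]
  simp only [LinearEquiv.trans_apply, LinearEquiv.symm_apply_apply]
  rw [hξ (θ t) ψ]
end

section
/- Let T_0 be a local O-algebra, finite and flat as an O-module, which is Gorenstein, and let f ∈ T_0. Then there is an isomorphism of T_0-modules Hom_O(T_0/(f), O) ≅ Ann_{T_0}(f) = Ker(T_0 →(×f) T_0). -/
set_option maxHeartbeats 1000000


theorem statement17
    (O : Type) [CommRing O] [IsDomain O] [IsDiscreteValuationRing O] [CharZero O]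
    (T₀ : Type) [CommRing T₀] [IsLocalRing T₀] [Algebra O T₀]
    [Module.Finite O T₀] [Module.Flat O T₀]
    (hGor : IsGorensteinAlgebra O T₀)
    (f : T₀) :
    -- `Hom_O(T₀/(f), O) ≅ Ann_{T₀}(f) = Ker(T₀ →(×f) T₀)` as `T₀`-modules
    ∃ e : ((T₀ ⧸ Ideal.span {f}) →ₗ[O] O) ≃ₗ[O] ↥(LinearMap.ker (LinearMap.mulLeft T₀ f)),
      ∀ (t : T₀) (φ : (T₀ ⧸ Ideal.span {f}) →ₗ[O] O),
        e (φ.comp (LinearMap.mulLeft O (algebraMap T₀ (T₀ ⧸ Ideal.span {f}) t))) =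
          t • e φ := by
  classical
  obtain ⟨ξ, hξ⟩ := hGor
  set I : Ideal T₀ := Ideal.span {f} with hI
  let π : T₀ →ₗ[O] T₀ ⧸ I := (Ideal.Quotient.mkₐ O I).toLinearMap
  have hπ : ∀ x : T₀, π x = Submodule.Quotient.mk x := fun x => rfl
  -- key compatibility: precomposition by `mulLeft` commutes with `π`
  have hcomp : ∀ (t : T₀) (φ : (T₀ ⧸ I) →ₗ[O] O),
      (φ.comp (LinearMap.mulLeft O (algebraMap T₀ (T₀ ⧸ I) t))).comp π
        = (φ.comp π).comp (LinearMap.mulLeft O t) := by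
    intro t φ
    ext x
    simp only [LinearMap.comp_apply, LinearMap.mulLeft_apply, hπ]
    congr 1
  -- the forward map lands in the kernel
  have hker : ∀ φ : (T₀ ⧸ I) →ₗ[O] O,
      ξ (φ.comp π) ∈ LinearMap.ker (LinearMap.mulLeft T₀ f) := by
    intro φ
    have h0 : (φ.comp π).comp (LinearMap.mulLeft O f) = 0 := by
      ext x
      simp only [LinearMap.comp_apply, LinearMap.mulLeft_apply, hπ, LinearMap.zero_apply]
      have : (Submodule.Quotient.mk (f * x) : T₀ ⧸ I) = 0 := by
        rw [Submodule.Quotient.mk_eq_zero]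
        exact I.mul_mem_right x (Ideal.subset_span rfl)
      rw [this, map_zero]
    rw [LinearMap.mem_ker, LinearMap.mulLeft_apply, ← hξ f (φ.comp π), h0, map_zero]
  -- forward linear map
  let F : ((T₀ ⧸ I) →ₗ[O] O) →ₗ[O] ↥(LinearMap.ker (LinearMap.mulLeft T₀ f)) :=
    { toFun := fun φ => ⟨ξ (φ.comp π), hker φ⟩
      map_add' := by
        intro φ ψ
        apply Subtype.ext
        show ξ ((φ + ψ).comp π) = ξ (φ.comp π) + ξ (ψ.comp π)
        rw [LinearMap.add_comp, map_add]
      map_smul' := by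
        intro c φ
        apply Subtype.ext
        show ξ ((c • φ).comp π) = (c • ⟨ξ (φ.comp π), hker φ⟩ :
          ↥(LinearMap.ker (LinearMap.mulLeft T₀ f))).1
        rw [LinearMap.smul_comp, map_smul]
        rfl }
  have hF : ∀ φ, (F φ : T₀) = ξ (φ.comp π) := fun φ => rfl
  -- inverse map
  have hvanish : ∀ t : ↥(LinearMap.ker (LinearMap.mulLeft T₀ f)),
      Submodule.restrictScalars O I ≤ LinearMap.ker (ξ.symm (t : T₀)) := by
    intro t x hx
    have hx' : f ∣ x := by
      rwa [Submodule.restrictScalars_mem, hI, Ideal.mem_span_singleton] at hx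
    obtain ⟨c, rfl⟩ := hx'
    have h0 : (ξ.symm (t : T₀)).comp (LinearMap.mulLeft O f) = 0 := by
      apply ξ.injective
      rw [hξ f (ξ.symm (t : T₀)), ξ.apply_symm_apply, map_zero]
      exact t.2
    have := congrArg (fun (g : T₀ →ₗ[O] O) => g c) h0
    simpa using this
  let G : ↥(LinearMap.ker (LinearMap.mulLeft T₀ f)) → ((T₀ ⧸ I) →ₗ[O] O) :=
    fun t => (Submodule.liftQ (Submodule.restrictScalars O I) (ξ.symm (t : T₀))
        (hvanish t)).comp
      (Submodule.Quotient.restrictScalarsEquiv O I).symm.toLinearMap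
  have hG : ∀ (t : ↥(LinearMap.ker (LinearMap.mulLeft T₀ f))) (x : T₀),
      G t (Submodule.Quotient.mk x) = ξ.symm (t : T₀) x := fun t x => rfl
  -- build the equivalence
  refine ⟨{ F with
    invFun := G
    left_inv := ?_
    right_inv := ?_ }, ?_⟩
  · intro φ
    apply LinearMap.ext
    intro y
    obtain ⟨x, rfl⟩ := Submodule.Quotient.mk_surjective _ y
    show G (F φ) (Submodule.Quotient.mk x) = φ (Submodule.Quotient.mk x)
    rw [hG, hF, ξ.symm_apply_apply]
    rfl
  · intro t
    ext
    show (F (G t) : T₀) = (t : T₀)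
    rw [hF]
    have : (G t).comp π = ξ.symm (t : T₀) := by
      ext x
      exact hG t x
    rw [this, ξ.apply_symm_apply]
  · intro t φ
    ext
    show ξ (((φ.comp (LinearMap.mulLeft O (algebraMap T₀ (T₀ ⧸ I) t))).comp π)) =
      ((t • F φ : ↥(LinearMap.ker (LinearMap.mulLeft T₀ f))) : T₀)
    rw [hcomp t φ, hξ t (φ.comp π)]
    rfl
end

section
/- Let T_0 be a local O-algebra, finite and flat as an O-module, Gorenstein, with T_{0,K} semisimple, let f ∈ T_0 and T := T_0/(f), assume T_K is semisimple, and let λ : T → O be a surjective O-algebra homomorphism with composite λ_0 : T_0 → T → O. Let T̃ denote the image of T in T_K (the quotient of T by its O-torsion) with induced surjection λ̃ : T̃ → O. Then η_{λ_0} = η_{λ̃} · λ_0(Ann_{T_0}(f)) as ideals of O, where η_{λ_0} := λ_0(Ann_{T_0}(Ker λ_0)), η_{λ̃} := λ̃(Ann_{T̃}(Ker λ̃)), and λ_0(Ann_{T_0}(f)) is the image in O of the annihilator ideal Ann_{T_0}(f). -/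
open nonZeroDivisors

-- auxiliary lemma 1: ideals in commutative semisimple rings are generated by idempotents
lemma exists_idem_aux {R : Type} [CommRing R] [IsSemisimpleRing R] (I : Ideal R) :
    ∃ u : R, u * u = u ∧ I = Ideal.span {u} := by
  obtain ⟨J, hJ⟩ := exists_isCompl I
  have h1 : (1 : R) ∈ I ⊔ J := by rw [hJ.sup_eq_top]; trivial
  obtain ⟨u, hu, w, hw, huw⟩ := Submodule.mem_sup.mp h1
  have hwu : w = 1 - u := by linear_combination huw
  have huw0 : u * w = 0 := by
    have : u * w ∈ I ⊓ J := ⟨Ideal.mul_mem_right _ _ hu, Ideal.mul_mem_left _ _ hw⟩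
    rwa [hJ.inf_eq_bot] at this
  refine ⟨u, ?_, ?_⟩
  · have : u * (1 - u) = 0 := by rw [← hwu]; exact huw0
    linear_combination -this
  · apply le_antisymm
    · intro x hx
      have hxw : x * w ∈ I ⊓ J := ⟨by
        have : x * w = x - x * u := by rw [hwu]; ring
        rw [this]; exact sub_mem hx (Ideal.mul_mem_left _ _ hu),
        Ideal.mul_mem_left _ _ hw⟩
      rw [hJ.inf_eq_bot] at hxw
      have : x = x * u := by
        have hx1 : x * (u + w) = x := by rw [huw]; ring
        rw [Submodule.mem_bot] at hxw
        linear_combination hxw - hx1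
      rw [this]
      exact Ideal.mul_mem_left _ _ (Ideal.subset_span rfl)
    · rw [Ideal.span_le, Set.singleton_subset_iff]; exact hu

lemma exists_dual_one {R M : Type} [CommRing R] [IsDomain R] [IsPrincipalIdealRing R]
    [AddCommGroup M] [Module R M] [Module.Finite R M] [NoZeroSMulDivisors R M]
    (n₀ : M) (hn : n₀ ≠ 0)
    (hsat : ∀ (s : R) (x : M), s • x ∈ Submodule.span R {n₀} →
      s = 0 ∨ x ∈ Submodule.span R {n₀}) :
    ∃ ψ : M →ₗ[R] R, ψ n₀ = 1 := by
  set N := Submodule.span R {n₀} with hN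
  haveI : NoZeroSMulDivisors R (M ⧸ N) := by
    constructor
    intro c x hcx
    obtain ⟨y, rfl⟩ := Submodule.Quotient.mk_surjective N x
    have hy : c • y ∈ N := by
      rw [← Submodule.Quotient.mk_eq_zero, Submodule.Quotient.mk_smul]
      exact hcx
    rcases hsat c y hy with h | h
    · exact Or.inl h
    · exact Or.inr (by rwa [Submodule.Quotient.mk_eq_zero])
  haveI : Module.Finite R (M ⧸ N) :=
    Module.Finite.of_surjective N.mkQ (Submodule.Quotient.mk_surjective N)
  haveI : Module.Free R (M ⧸ N) := Module.free_of_finite_type_torsion_free'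
  obtain ⟨σ, hσ⟩ := Module.projective_lifting_property N.mkQ (LinearMap.id)
    (Submodule.Quotient.mk_surjective N)
  set ρ : M →ₗ[R] M := LinearMap.id - σ.comp N.mkQ with hρdef
  have hρ : ∀ x : M, ρ x ∈ N := by
    intro x
    have h1 : N.mkQ (ρ x) = 0 := by
      have h2 := LinearMap.congr_fun hσ (N.mkQ x)
      simp only [hρdef, LinearMap.sub_apply, LinearMap.id_apply, LinearMap.comp_apply, map_sub]
      simp only [LinearMap.comp_apply, LinearMap.id_apply] at h2
      rw [h2, sub_self]
    rwa [← Submodule.Quotient.mk_eq_zero]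
  let eqv := LinearEquiv.toSpanNonzeroSingleton R M n₀ hn
  refine ⟨eqv.symm.toLinearMap ∘ₗ (ρ.codRestrict N hρ), ?_⟩
  have hρn : ρ n₀ = n₀ := by
    have hmkn : N.mkQ n₀ = 0 := by
      rw [Submodule.mkQ_apply, Submodule.Quotient.mk_eq_zero]
      exact Submodule.mem_span_singleton_self n₀
    simp [hρdef, hmkn]
  have h3 : (ρ.codRestrict N hρ) n₀ = eqv 1 := by
    apply Subtype.ext
    rw [LinearEquiv.toSpanNonzeroSingleton_one]
    simpa using hρn
  simp only [LinearMap.comp_apply, LinearEquiv.coe_toLinearMap, h3, LinearEquiv.symm_apply_apply]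

set_option maxHeartbeats 1000000 in
theorem statement18
    (O : Type) [CommRing O] [IsDomain O] [IsDiscreteValuationRing O] [CharZero O]
    (K : Type) [Field K] [Algebra O K] [IsFractionRing O K]
    -- `T₀` is a Gorenstein finite flat local `O`-algebra with `T₀ ⊗ K` semisimple
    (T₀ : Type) [CommRing T₀] [IsLocalRing T₀] [Algebra O T₀]
    [Module.Finite O T₀] [Module.Flat O T₀]
    (hGor : IsGorensteinAlgebra O T₀)
    (T₀K : Type) [CommRing T₀K] [Algebra T₀ T₀K] [Algebra O T₀K] [Algebra K T₀K]
    [IsScalarTower O T₀ T₀K] [IsScalarTower O K T₀K]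
    [IsLocalization (Algebra.algebraMapSubmonoid T₀ O⁰) T₀K]
    [IsSemisimpleRing T₀K]
    -- `T = T₀/(f)`, with `T_K = T ⊗ K` semisimple
    (f : T₀)
    (TK : Type) [CommRing TK] [Algebra (T₀ ⧸ Ideal.span {f}) TK] [Algebra O TK] [Algebra K TK]
    [IsScalarTower O (T₀ ⧸ Ideal.span {f}) TK] [IsScalarTower O K TK]
    [IsLocalization (Algebra.algebraMapSubmonoid (T₀ ⧸ Ideal.span {f}) O⁰) TK]
    [IsSemisimpleRing TK]
    -- `λ : T → O` surjective, `λ₀ = λ ∘ (T₀ → T)`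
    (lam : (T₀ ⧸ Ideal.span {f}) →ₐ[O] O) (hlam : Function.Surjective lam)
    -- `T̃` is the image of `T` in `T_K`, and `λ̃ : T̃ → O` the induced surjection
    (lamT : ↥((IsScalarTower.toAlgHom O (T₀ ⧸ Ideal.span {f}) TK).range) →ₐ[O] O)
    (hlamT : ∀ (t : T₀ ⧸ Ideal.span {f})
      (x : ↥((IsScalarTower.toAlgHom O (T₀ ⧸ Ideal.span {f}) TK).range)),
      (x : TK) = algebraMap (T₀ ⧸ Ideal.span {f}) TK t → lamT x = lam t) :
    -- `η_{λ₀} = η_{λ̃} · λ₀(Ann_{T₀}(f))`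
    Ideal.map ((lam.comp (Ideal.Quotient.mkₐ O (Ideal.span {f}))).toRingHom)
        (Submodule.annihilator
          (RingHom.ker (lam.comp (Ideal.Quotient.mkₐ O (Ideal.span {f}))).toRingHom)) =
      Ideal.map lamT.toRingHom (Submodule.annihilator (RingHom.ker lamT.toRingHom)) *
        Ideal.map ((lam.comp (Ideal.Quotient.mkₐ O (Ideal.span {f}))).toRingHom)
          (Submodule.annihilator (Ideal.span {f})) := by
  classical
  set T := T₀ ⧸ Ideal.span {f} with hTdef
  set l0 : T₀ →+* O := (lam.comp (Ideal.Quotient.mkₐ O (Ideal.span {f}))).toRingHom with hl0def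
  set mk : T₀ →+* T := Ideal.Quotient.mk (Ideal.span {f}) with hmkdef
  have hl0 : ∀ t : T₀, l0 t = lam (mk t) := fun _ => rfl
  have hl0alg : ∀ c : O, l0 (algebraMap O T₀ c) = c := by
    intro c
    exact (lam.comp (Ideal.Quotient.mkₐ O (Ideal.span {f}))).commutes c
  set ι₀ : T₀ →+* T₀K := algebraMap T₀ T₀K with hι₀def
  set ι : T →+* TK := algebraMap T TK with hιdef
  have hOKinj : Function.Injective (algebraMap O K) := IsFractionRing.injective O K
  -- killing nonzerodivisor scalars in T₀K and TK
  have hsmul0 : ∀ s : O, s ∈ O⁰ → ∀ x : T₀K, algebraMap O T₀K s * x = 0 → x = 0 := by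
    intro s hs x hx
    have h1 : algebraMap O T₀K s = algebraMap K T₀K (algebraMap O K s) :=
      IsScalarTower.algebraMap_apply O K T₀K s
    have h2 : IsUnit (algebraMap O T₀K s) := by
      rw [h1]
      exact (isUnit_iff_ne_zero.mpr (fun h0 =>
        nonZeroDivisors.ne_zero hs (IsFractionRing.to_map_eq_zero_iff.mp h0))).map _
    exact (h2.mul_right_eq_zero).mp hx
  have hsmul0' : ∀ s : O, s ∈ O⁰ → ∀ x : TK, algebraMap O TK s * x = 0 → x = 0 := by
    intro s hs x hx
    have h1 : algebraMap O TK s = algebraMap K TK (algebraMap O K s) :=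
      IsScalarTower.algebraMap_apply O K TK s
    have h2 : IsUnit (algebraMap O TK s) := by
      rw [h1]
      exact (isUnit_iff_ne_zero.mpr (fun h0 =>
        nonZeroDivisors.ne_zero hs (IsFractionRing.to_map_eq_zero_iff.mp h0))).map _
    exact (h2.mul_right_eq_zero).mp hx
  -- T₀ is free over O, hence torsion free, hence maps injectively into T₀K
  haveI : Module.FinitePresentation O T₀ := Module.finitePresentation_of_finite O T₀
  haveI : Module.Free O T₀ := Module.free_of_flat_of_isLocalRing
  have hι₀inj : Function.Injective ι₀ := by
    rw [hι₀def]
    apply IsLocalization.injective T₀K (M := Algebra.algebraMapSubmonoid T₀ O⁰)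
    rintro y ⟨s, hs, rfl⟩
    rw [mem_nonZeroDivisors_iff_right]
    intro z hz
    have : s • z = 0 := by rw [Algebra.smul_def, mul_comm]; exact hz
    rcases smul_eq_zero.mp this with h | h
    · exact absurd h (nonZeroDivisors.ne_zero hs)
    · exact h
  -- the map q : T₀K → TK
  have hcomap : Algebra.algebraMapSubmonoid T₀ O⁰ ≤
      (Algebra.algebraMapSubmonoid T O⁰).comap mk := by
    rintro y ⟨s, hs, rfl⟩
    refine ⟨s, hs, ?_⟩
    rw [IsScalarTower.algebraMap_apply O T₀ T, Ideal.Quotient.algebraMap_eq]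
  set q : T₀K →+* TK := IsLocalization.map TK mk hcomap with hqdef
  have hq : ∀ t : T₀, q (ι₀ t) = ι (mk t) := by
    intro t
    rw [hqdef, hι₀def, hιdef]
    exact IsLocalization.map_eq hcomap t
  -- the map lK' : TK → K and lK : T₀K → K
  have hunit : ∀ y : (Algebra.algebraMapSubmonoid T O⁰),
      IsUnit (((algebraMap O K).comp lam.toRingHom) y) := by
    rintro ⟨y, s, hs, rfl⟩
    have h1 : lam (algebraMap O T s) = s := by
      have := lam.commutes s
      exact this
    simpa [h1] using IsLocalization.map_units K ⟨s, hs⟩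
  set lK' : TK →+* K := IsLocalization.lift hunit with hlK'def
  have hlK'ι : ∀ t : T, lK' (ι t) = algebraMap O K (lam t) := by
    intro t
    rw [hlK'def, hιdef]
    exact IsLocalization.lift_eq hunit t
  set lK : T₀K →+* K := lK'.comp q with hlKdef
  have hlKι₀ : ∀ t : T₀, lK (ι₀ t) = algebraMap O K (l0 t) := by
    intro t
    rw [hlKdef, RingHom.comp_apply, hq, hlK'ι, hl0]
  have hlKalg : ∀ c : O, lK (algebraMap O T₀K c) = algebraMap O K c := by
    intro c
    rw [IsScalarTower.algebraMap_apply O T₀ T₀K, hlKι₀, hl0alg]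
  have hlK'alg : ∀ c : O, lK' (algebraMap O TK c) = algebraMap O K c := by
    intro c
    rw [IsScalarTower.algebraMap_apply O T TK, hlK'ι]
    have h1 : lam (algebraMap O T c) = c := by
      have := lam.commutes c
      exact this
    rw [h1]
  have hqalg : ∀ c : O, q (algebraMap O T₀K c) = algebraMap O TK c := by
    intro c
    have hmkalg : mk (algebraMap O T₀ c) = algebraMap O T c := by
      rw [IsScalarTower.algebraMap_apply O T₀ T, hmkdef, Ideal.Quotient.algebraMap_eq]
    rw [IsScalarTower.algebraMap_apply O T₀ T₀K, hq, hmkalg,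
      IsScalarTower.algebraMap_apply O T TK]
  -- the idempotent e cutting out the λ-component of T₀K
  obtain ⟨u, hu, hkeru⟩ := exists_idem_aux (RingHom.ker lK)
  set e : T₀K := 1 - u with hedef
  have hlKu : lK u = 0 := by
    have : u ∈ RingHom.ker lK := by rw [hkeru]; exact Ideal.subset_span rfl
    exact this
  have hlKe : lK e = 1 := by rw [hedef, map_sub, map_one, hlKu, sub_zero]
  have hkere : ∀ w : T₀K, lK w = 0 → e * w = 0 := by
    intro w hw
    have hmem : w ∈ RingHom.ker lK := hw
    rw [hkeru] at hmem
    obtain ⟨y, hy⟩ := Ideal.mem_span_singleton'.mp hmem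
    rw [hedef, ← hy]
    linear_combination -y * hu
  have hemul : ∀ t : T₀, e * ι₀ t = algebraMap O T₀K (l0 t) * e := by
    intro t
    have h := hkere (ι₀ t - algebraMap O T₀K (l0 t))
      (by rw [map_sub, hlKι₀, hlKalg, sub_self])
    linear_combination h
  -- the idempotent ε cutting out the support of f in T₀K
  obtain ⟨ε, hε, hspanε⟩ := exists_idem_aux (Ideal.span {ι₀ f})
  have hfup : ∃ y, y * ε = ι₀ f := by
    apply Ideal.mem_span_singleton'.mp
    rw [← hspanε]
    exact Ideal.subset_span rfl
  have hεf : ∃ y, y * ι₀ f = ε := by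
    apply Ideal.mem_span_singleton'.mp
    rw [hspanε]
    exact Ideal.subset_span rfl
  have hfε : ι₀ f * (1 - ε) = 0 := by
    obtain ⟨y, hy⟩ := hfup
    rw [← hy]
    linear_combination -y * hε
  have hl0f : l0 f = 0 := by
    rw [hl0]
    have : mk f = 0 := by
      rw [hmkdef]
      exact Ideal.Quotient.eq_zero_iff_mem.mpr (Ideal.subset_span rfl)
    rw [this, map_zero]
  have hlKf : lK (ι₀ f) = 0 := by rw [hlKι₀, hl0f, map_zero]
  have hlKε : lK ε = 0 := by
    obtain ⟨y, hy⟩ := hεf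
    rw [← hy, map_mul, hlKf, mul_zero]
  have heε : e * ε = 0 := hkere ε hlKε
  have heme : e * (1 - ε) = e := by linear_combination -heε
  have hqε : q ε = 0 := by
    obtain ⟨y, hy⟩ := hεf
    have hmkf : mk f = 0 :=
      Ideal.Quotient.eq_zero_iff_mem.mpr (Ideal.subset_span rfl)
    rw [← hy, map_mul, hq, hmkf, map_zero, mul_zero]
  have hmkalg2 : ∀ c : O, mk (algebraMap O T₀ c) = algebraMap O T c := by
    intro c
    rw [IsScalarTower.algebraMap_apply O T₀ T, hmkdef, Ideal.Quotient.algebraMap_eq]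
  -- kernel of q kills (1 - ε)
  have hkerq : ∀ z : T₀K, q z = 0 → z * (1 - ε) = 0 := by
    intro z hz
    obtain ⟨⟨t, sm⟩, hts⟩ := IsLocalization.surj (Algebra.algebraMapSubmonoid T₀ O⁰) z
    obtain ⟨s, hs, hsm⟩ := sm.2
    have e1 : ι₀ (algebraMap O T₀ s) = algebraMap O T₀K s :=
      (IsScalarTower.algebraMap_apply O T₀ T₀K s).symm
    have hts' : z * algebraMap O T₀K s = ι₀ t := by rw [← e1, hsm]; exact hts
    have h1 : ι (mk t) = 0 := by rw [← hq, ← hts', map_mul, hz, zero_mul]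
    obtain ⟨⟨m, s', hs', hms⟩, hm⟩ :=
      (IsLocalization.map_eq_zero_iff (Algebra.algebraMapSubmonoid T O⁰) TK (mk t)).mp h1
    have h3 : algebraMap O T₀ s' * t ∈ Ideal.span {f} := by
      have h4 : mk (algebraMap O T₀ s' * t) = 0 := by
        rw [map_mul, hmkalg2, hms]
        exact hm
      rw [hmkdef] at h4
      exact Ideal.Quotient.eq_zero_iff_mem.mp h4
    obtain ⟨r, hr⟩ := Ideal.mem_span_singleton'.mp h3
    have e2 : ι₀ (algebraMap O T₀ s') = algebraMap O T₀K s' :=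
      (IsScalarTower.algebraMap_apply O T₀ T₀K s').symm
    have h5 : algebraMap O T₀K s' * ι₀ t = ι₀ r * ι₀ f := by
      rw [← e2, ← map_mul, ← hr, map_mul]
    have key : algebraMap O T₀K s * (algebraMap O T₀K s' * (z * (1 - ε))) = 0 := by
      linear_combination (algebraMap O T₀K s' * (1 - ε)) * hts' + (1 - ε) * h5 + ι₀ r * hfε
    exact hsmul0 s' hs' _ (hsmul0 s hs _ key)
  -- the idempotent eb = q e in TK
  set eb : TK := q e with hebdef
  have hebker : ∀ w : TK, lK' w = 0 → eb * w = 0 := by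
    intro w hw
    obtain ⟨⟨a, sm⟩, hts⟩ := IsLocalization.surj (Algebra.algebraMapSubmonoid T O⁰) w
    obtain ⟨s, hs, hsm⟩ := sm.2
    have e1 : ι (algebraMap O T s) = algebraMap O TK s :=
      (IsScalarTower.algebraMap_apply O T TK s).symm
    have hts' : w * algebraMap O TK s = ι a := by rw [← e1, hsm]; exact hts
    have hlama : lam a = 0 := by
      have h5 : lK' (ι a) = 0 := by rw [← hts', map_mul, hw, zero_mul]
      rw [hlK'ι] at h5
      exact hOKinj (by rw [h5, map_zero])
    obtain ⟨a₀, rfl⟩ : ∃ a₀, mk a₀ = a := Ideal.Quotient.mk_surjective a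
    have h2 : eb * ι (mk a₀) = 0 := by
      rw [hebdef, ← hq, ← map_mul]
      have h6 : e * ι₀ a₀ = 0 := by
        have h7 : l0 a₀ = 0 := by rw [hl0]; exact hlama
        rw [hemul, h7, map_zero, zero_mul]
      rw [h6, map_zero]
    have key : algebraMap O TK s * (eb * w) = 0 := by
      linear_combination eb * hts' + h2
    exact hsmul0' s hs _ key
  have hebmul : ∀ t : T, eb * ι t = algebraMap O TK (lam t) * eb := by
    intro t
    have h := hebker (ι t - algebraMap O TK (lam t))
      (by rw [map_sub, hlK'ι, hlK'alg, sub_self])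
    linear_combination h
  have hlK'eb : lK' eb = 1 := by
    have := hlKe
    rw [hlKdef] at this
    exact this
  -- surjectivity of the two maps to O
  have hl0surj : Function.Surjective l0 := by
    intro c
    obtain ⟨t, ht⟩ := hlam c
    obtain ⟨t₀, ht₀⟩ := Ideal.Quotient.mk_surjective t
    exact ⟨t₀, by rw [hl0, hmkdef, ht₀, ht]⟩
  have hlamTsurj : Function.Surjective lamT := by
    intro c
    obtain ⟨t, ht⟩ := hlam c
    refine ⟨⟨ι t, ⟨t, by simp [hιdef]; rfl⟩⟩, ?_⟩
    rw [hlamT t _ rfl, ht]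
  -- characterization of the first congruence ideal
  have charM1 : ∀ c : O, c ∈ Ideal.map l0 (Submodule.annihilator (RingHom.ker l0)) ↔
      ∃ t : T₀, ι₀ t = algebraMap O T₀K c * e := by
    intro c
    constructor
    · intro hc
      obtain ⟨t, htAnn, rfl⟩ := (Ideal.mem_map_iff_of_surjective l0 hl0surj).mp hc
      refine ⟨t, ?_⟩
      have hu0 : ι₀ t * u = 0 := by
        obtain ⟨⟨a, sm⟩, hts⟩ := IsLocalization.surj (Algebra.algebraMapSubmonoid T₀ O⁰) u
        obtain ⟨s, hs, hsm⟩ := sm.2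
        have e1 : ι₀ (algebraMap O T₀ s) = algebraMap O T₀K s :=
          (IsScalarTower.algebraMap_apply O T₀ T₀K s).symm
        have hts' : u * algebraMap O T₀K s = ι₀ a := by rw [← e1, hsm]; exact hts
        have hla : l0 a = 0 := by
          have h5 : lK (ι₀ a) = 0 := by rw [← hts', map_mul, hlKu, zero_mul]
          rw [hlKι₀] at h5
          exact hOKinj (by rw [h5, map_zero])
        have hta : t * a = 0 := by
          have := Submodule.mem_annihilator.mp htAnn a (RingHom.mem_ker.mpr hla)
          simpa [smul_eq_mul] using this
        have key : algebraMap O T₀K s * (ι₀ t * u) = 0 := by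
          have h6 : ι₀ t * ι₀ a = 0 := by rw [← map_mul, hta, map_zero]
          linear_combination ι₀ t * hts' + h6
        exact hsmul0 s hs _ key
      have h7 : e * ι₀ t = ι₀ t := by rw [hedef]; linear_combination -hu0
      calc ι₀ t = e * ι₀ t := h7.symm
        _ = algebraMap O T₀K (l0 t) * e := hemul t
    · rintro ⟨t, ht⟩
      have hval : l0 t = c := by
        apply hOKinj
        rw [← hlKι₀, ht, map_mul, hlKe, mul_one, hlKalg]
      refine (Ideal.mem_map_iff_of_surjective l0 hl0surj).mpr ⟨t, ?_, hval⟩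
      rw [Submodule.mem_annihilator]
      intro a ha
      have hla : l0 a = 0 := RingHom.mem_ker.mp ha
      have h10 : ι₀ (t * a) = 0 := by
        rw [map_mul, ht]
        have h8 : e * ι₀ a = 0 := by rw [hemul, hla, map_zero, zero_mul]
        linear_combination algebraMap O T₀K c * h8
      have h9 : t * a = 0 := hι₀inj (by rw [h10, map_zero])
      simpa [smul_eq_mul] using h9
  -- characterization of the congruence ideal on the T-tilde side
  have charM2 : ∀ c : O,
      c ∈ Ideal.map lamT.toRingHom (Submodule.annihilator (RingHom.ker lamT.toRingHom)) ↔
      ∃ t : T₀, ι₀ t * (1 - ε) = algebraMap O T₀K c * e := by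
    intro c
    constructor
    · intro hc
      obtain ⟨x, hxAnn, hval⟩ := (Ideal.mem_map_iff_of_surjective _ hlamTsurj).mp hc
      obtain ⟨t, htx⟩ := x.2
      have htx' : (x : TK) = ι t := by rw [← htx]; simp [hιdef]; rfl
      have hx1 : (x : TK) * (1 - eb) = 0 := by
        obtain ⟨⟨a, sm⟩, hts⟩ := IsLocalization.surj (Algebra.algebraMapSubmonoid T O⁰) (1 - eb)
        obtain ⟨s, hs, hsm⟩ := sm.2
        have e1 : ι (algebraMap O T s) = algebraMap O TK s :=
          (IsScalarTower.algebraMap_apply O T TK s).symm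
        have hts' : (1 - eb) * algebraMap O TK s = ι a := by rw [← e1, hsm]; exact hts
        have hlama : lam a = 0 := by
          have h5 : lK' (ι a) = 0 := by
            rw [← hts', map_mul, map_sub, map_one, hlK'eb, sub_self, zero_mul]
          rw [hlK'ι] at h5
          exact hOKinj (by rw [h5, map_zero])
        set xa : ↥(IsScalarTower.toAlgHom O T TK).range := ⟨ι a, ⟨a, by simp [hιdef]⟩⟩
          with hxadef
        have hxaker : xa ∈ RingHom.ker lamT.toRingHom := by
          have h11 : lamT xa = lam a := hlamT a xa rfl
          have : lamT xa = 0 := by rw [h11, hlama]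
          exact this
        have hxxa : x * xa = 0 := by
          have := Submodule.mem_annihilator.mp hxAnn xa hxaker
          rwa [smul_eq_mul] at this
        have hval0 : (x : TK) * ι a = 0 := by
          have h12 : ((x * xa : ↥(IsScalarTower.toAlgHom O T TK).range) : TK) = 0 := by
            rw [hxxa]; rfl
          rw [MulMemClass.coe_mul] at h12
          simpa [hxadef] using h12
        have key : algebraMap O TK s * ((x : TK) * (1 - eb)) = 0 := by
          linear_combination (x : TK) * hts' + hval0
        exact hsmul0' s hs _ key
      have hlamx : lamT x = lam t := hlamT t x htx'
      have hlamtc : lam t = c := by rw [← hlamx]; exact hval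
      have h6 : ι t = algebraMap O TK c * eb := by
        calc ι t = (x : TK) := htx'.symm
          _ = (x : TK) * eb := by linear_combination hx1
          _ = eb * ι t := by rw [htx']; ring
          _ = algebraMap O TK (lam t) * eb := hebmul t
          _ = algebraMap O TK c * eb := by rw [hlamtc]
      obtain ⟨t₀, rfl⟩ : ∃ t₀, mk t₀ = t := Ideal.Quotient.mk_surjective t
      have h8 : q (ι₀ t₀ - algebraMap O T₀K c * e) = 0 := by
        rw [map_sub, hq, map_mul, hqalg, ← hebdef, h6, sub_self]
      have h9 := hkerq _ h8
      exact ⟨t₀, by linear_combination h9 + (algebraMap O T₀K c) * heme⟩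
    · rintro ⟨t₀, ht⟩
      set x : ↥(IsScalarTower.toAlgHom O T TK).range :=
        ⟨ι (mk t₀), ⟨mk t₀, by simp [hιdef]⟩⟩ with hxdef
      have hcoe : (x : TK) = algebraMap O TK c * eb := by
        have h1 := congrArg q ht
        rw [map_mul, map_sub, map_one, hqε, sub_zero, hq, map_mul, hqalg, mul_one,
          ← hebdef] at h1
        exact h1
      have hlamval : lam (mk t₀) = c := by
        apply hOKinj
        have h2 : lK' ((x : TK)) = lK' (ι (mk t₀)) := rfl
        rw [hcoe, map_mul, hlK'eb, mul_one, hlK'alg] at h2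
        rw [hlK'ι] at h2
        exact h2.symm
      have hxann : x ∈ Submodule.annihilator (RingHom.ker lamT.toRingHom) := by
        rw [Submodule.mem_annihilator]
        intro y hy
        obtain ⟨ty, hty⟩ := y.2
        have hty' : (y : TK) = ι ty := by rw [← hty]; simp [hιdef]; rfl
        have hlamty : lam ty = 0 := by
          rw [← hlamT ty y hty']
          exact hy
        have hcoe0 : ((x * y : ↥(IsScalarTower.toAlgHom O T TK).range) : TK) = 0 := by
          rw [MulMemClass.coe_mul, hcoe, hty']
          have h13 : eb * ι ty = 0 := by rw [hebmul, hlamty, map_zero, zero_mul]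
          linear_combination algebraMap O TK c * h13
        have h14 : x * y = 0 := Subtype.ext (by rw [hcoe0]; rfl)
        rw [smul_eq_mul]
        exact h14
      refine (Ideal.mem_map_iff_of_surjective _ hlamTsurj).mpr ⟨x, hxann, ?_⟩
      have h15 : lamT x = lam (mk t₀) := hlamT (mk t₀) x rfl
      have : lamT x = c := by rw [h15, hlamval]
      exact this
  -- characterization of the annihilator-of-f ideal
  have charM3 : ∀ c : O, c ∈ Ideal.map l0 (Submodule.annihilator (Ideal.span {f})) ↔
      ∃ z : T₀, z * f = 0 ∧ l0 z = c := by
    intro c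
    rw [Ideal.mem_map_iff_of_surjective l0 hl0surj]
    constructor
    · rintro ⟨z, hz, rfl⟩
      refine ⟨z, ?_, rfl⟩
      have := Submodule.mem_annihilator.mp hz f (Ideal.subset_span rfl)
      simpa [smul_eq_mul] using this
    · rintro ⟨z, hzf, rfl⟩
      refine ⟨z, ?_, rfl⟩
      rw [Submodule.mem_annihilator]
      intro a ha
      obtain ⟨r, hr⟩ := Ideal.mem_span_singleton'.mp ha
      have h16 : z * a = 0 := by rw [← hr]; linear_combination r * hzf
      simpa [smul_eq_mul] using h16
  -- name the three ideals
  set M1 := Ideal.map l0 (Submodule.annihilator (RingHom.ker l0)) with hM1def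
  set M2 := Ideal.map lamT.toRingHom (Submodule.annihilator (RingHom.ker lamT.toRingHom))
    with hM2def
  set M3 := Ideal.map l0 (Submodule.annihilator (Ideal.span {f})) with hM3def
  -- easy inclusion M2 * M3 ≤ M1
  have heasy : M2 * M3 ≤ M1 := by
    rw [Ideal.mul_le]
    intro r hr s hs
    obtain ⟨t, ht⟩ := (charM2 r).mp hr
    obtain ⟨z, hzf, hz⟩ := (charM3 s).mp hs
    apply (charM1 (r * s)).mpr
    refine ⟨t * z, ?_⟩
    have hzε : ι₀ z * ε = 0 := by
      obtain ⟨y, hy⟩ := hεf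
      have h20 : ι₀ z * ι₀ f = 0 := by rw [← map_mul, hzf, map_zero]
      calc ι₀ z * ε = y * (ι₀ z * ι₀ f) := by rw [← hy]; ring
        _ = 0 := by rw [h20, mul_zero]
    have hez : e * ι₀ z = algebraMap O T₀K (l0 z) * e := hemul z
    have h21 : ι₀ (t * z) = algebraMap O T₀K (r * s) * e := by
      rw [map_mul, map_mul]
      calc ι₀ t * ι₀ z = (ι₀ t * (1 - ε)) * ι₀ z + (ι₀ z * ε) * ι₀ t := by ring
        _ = (algebraMap O T₀K r * e) * ι₀ z + 0 := by rw [ht, hzε, zero_mul]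
        _ = algebraMap O T₀K r * (e * ι₀ z) := by ring
        _ = algebraMap O T₀K r * (algebraMap O T₀K (l0 z) * e) := by rw [hez]
        _ = algebraMap O T₀K r * algebraMap O T₀K s * e := by rw [hz]; ring
    exact h21
  -- torsion-freeness of T₀K over O
  have hNZD : NoZeroSMulDivisors O T₀K := by
    constructor
    intro c x hcx
    by_cases hc : c = 0
    · exact Or.inl hc
    · right
      have h22 : algebraMap O T₀K c * x = 0 := by rw [← Algebra.smul_def]; exact hcx
      exact hsmul0 c (mem_nonZeroDivisors_of_ne_zero hc) x h22
  haveI := hNZD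
  -- the lattice L' = image of T₀ in (1-ε)·T₀K
  set μ : T₀ →ₗ[O] T₀K :=
    (LinearMap.mulRight O ((1 : T₀K) - ε)).comp (IsScalarTower.toAlgHom O T₀ T₀K).toLinearMap
    with hμdef
  have hμ : ∀ t : T₀, μ t = ι₀ t * (1 - ε) := by
    intro t
    simp [hμdef, hι₀def]
  set L' := LinearMap.range μ with hL'def
  haveI hLfin : Module.Finite O ↥L' := by rw [hL'def]; exact Module.Finite.range μ
  haveI hLnzd : NoZeroSMulDivisors O ↥L' := by
    rw [hL'def]
    exact Function.Injective.noZeroSMulDivisors Subtype.val Subtype.val_injective rfl (fun _ _ => rfl)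
  -- principal generators of M1 and M2
  obtain ⟨a₀, ha₀⟩ := (IsPrincipalIdealRing.principal M1).principal
  obtain ⟨b₀, hb₀⟩ := (IsPrincipalIdealRing.principal M2).principal
  have hM1M2 : M1 ≤ M2 := by
    intro c hc
    obtain ⟨t, ht⟩ := (charM1 c).mp hc
    apply (charM2 c).mpr
    exact ⟨t, by rw [ht]; linear_combination algebraMap O T₀K c * heme⟩
  have hb₀ne : b₀ ≠ 0 := by
    obtain ⟨⟨t, sm⟩, hts⟩ := IsLocalization.surj (Algebra.algebraMapSubmonoid T₀ O⁰) e
    obtain ⟨s, hs, hsm⟩ := sm.2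
    have e1 : ι₀ (algebraMap O T₀ s) = algebraMap O T₀K s :=
      (IsScalarTower.algebraMap_apply O T₀ T₀K s).symm
    have hts' : e * algebraMap O T₀K s = ι₀ t := by rw [← e1, hsm]; exact hts
    have hsM2 : s ∈ M2 := by
      apply (charM2 s).mpr
      refine ⟨t, ?_⟩
      rw [← hts']
      linear_combination algebraMap O T₀K s * heme
    intro hb0
    rw [hb0] at hb₀
    rw [hb₀] at hsM2
    rw [Submodule.span_zero_singleton, Submodule.mem_bot] at hsM2
    exact nonZeroDivisors.ne_zero hs hsM2
  have ha₀M1 : a₀ ∈ M1 := by rw [ha₀]; exact Submodule.mem_span_singleton_self a₀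
  obtain ⟨t_e, hte⟩ := (charM1 a₀).mp ha₀M1
  have ha₀M2 : a₀ ∈ Submodule.span O {b₀} := by rw [← hb₀]; exact hM1M2 ha₀M1
  obtain ⟨d, hd⟩ := Ideal.mem_span_singleton'.mp ha₀M2
  -- the generator n₀ = b₀·e of L' ∩ K·e
  obtain ⟨tb, htb⟩ := (charM2 b₀).mp (by rw [hb₀]; exact Submodule.mem_span_singleton_self b₀)
  have hbe_mem : algebraMap O T₀K b₀ * e ∈ L' := by
    rw [hL'def]
    exact ⟨tb, by rw [hμ]; exact htb⟩
  set n₀ : ↥L' := ⟨algebraMap O T₀K b₀ * e, hbe_mem⟩ with hn₀def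
  have hene : e ≠ 0 := by
    intro h0
    have h23 := hlKe
    rw [h0, map_zero] at h23
    exact zero_ne_one h23
  have hn₀ne : n₀ ≠ 0 := by
    intro h0
    have h1 : algebraMap O T₀K b₀ * e = 0 := by
      have h24 := congrArg Subtype.val h0
      simpa [hn₀def] using h24
    exact hene (hsmul0 b₀ (mem_nonZeroDivisors_of_ne_zero hb₀ne) e h1)
  -- the saturation property of n₀ in L'
  have hsat : ∀ (s : O) (x : ↥L'), s • x ∈ Submodule.span O {n₀} →
      s = 0 ∨ x ∈ Submodule.span O {n₀} := by
    intro s x hsx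
    by_cases hs0 : s = 0
    · exact Or.inl hs0
    right
    obtain ⟨cc, hcc⟩ := Submodule.mem_span_singleton.mp hsx
    obtain ⟨t, htμ⟩ := x.2
    have hμt : ι₀ t * (1 - ε) = (x : T₀K) := by rw [← hμ]; exact htμ
    have hval : algebraMap O T₀K s * (x : T₀K) = algebraMap O T₀K (cc * b₀) * e := by
      have h2 : cc • ((algebraMap O T₀K b₀) * e) = s • (x : T₀K) := by
        simpa [hn₀def] using congrArg Subtype.val hcc
      rw [Algebra.smul_def, Algebra.smul_def] at h2
      rw [map_mul]
      linear_combination -h2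
    have hlval : algebraMap O K (s * l0 t) = algebraMap O K (cc * b₀) := by
      have h3 := congrArg lK hval
      rw [map_mul, map_mul, hlKalg, hlKalg, hlKe, mul_one] at h3
      have h4 : lK ((x : T₀K)) = algebraMap O K (l0 t) := by
        rw [← hμt, map_mul, hlKι₀, map_sub, map_one, hlKε, sub_zero, mul_one]
      rw [h4, ← map_mul] at h3
      rw [map_mul]
      rw [map_mul] at h3
      exact h3
    have hslt : s * l0 t = cc * b₀ := hOKinj hlval
    have hxe : (x : T₀K) = algebraMap O T₀K (l0 t) * e := by
      have h5 : algebraMap O T₀K s * ((x : T₀K) - algebraMap O T₀K (l0 t) * e) = 0 := by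
        have e9 : algebraMap O T₀K s * algebraMap O T₀K (l0 t) =
            algebraMap O T₀K (cc * b₀) := by rw [← map_mul, hslt]
        linear_combination hval - e9 * e
      have h6 := hsmul0 s (mem_nonZeroDivisors_of_ne_zero hs0) _ h5
      exact sub_eq_zero.mp h6
    have hltM2 : l0 t ∈ M2 := (charM2 (l0 t)).mpr ⟨t, by rw [hμt]; exact hxe⟩
    have hltM2' : l0 t ∈ Submodule.span O {b₀} := by rw [← hb₀]; exact hltM2
    obtain ⟨d', hd'⟩ := Ideal.mem_span_singleton'.mp hltM2'
    apply Submodule.mem_span_singleton.mpr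
    refine ⟨d', ?_⟩
    apply Subtype.ext
    have h25 : (↑(d' • n₀) : T₀K) = d' • (algebraMap O T₀K b₀ * e) := by simp [hn₀def]
    rw [h25, Algebra.smul_def, hxe, ← hd', map_mul]
    ring
  -- a linear functional on L' taking value 1 at n₀
  obtain ⟨ψ, hψ⟩ := exists_dual_one n₀ hn₀ne hsat
  -- apply Gorenstein duality
  set ψ₀ : T₀ →ₗ[O] O := ψ.comp (LinearMap.codRestrict L' μ (fun t => ⟨t, rfl⟩)) with hψ₀def
  obtain ⟨ξ, hξ⟩ := hGor
  set z₀ : T₀ := ξ ψ₀ with hz₀def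
  set Φ : T₀ →ₗ[O] O := ξ.symm 1 with hΦdef
  have hΦmul : ∀ a : T₀, ξ (Φ.comp (LinearMap.mulLeft O a)) = a := by
    intro a
    rw [hΦdef, hξ, LinearEquiv.apply_symm_apply, mul_one]
  have hψ₀val : ∀ t : T₀, ψ₀ t = ψ ⟨μ t, ⟨t, rfl⟩⟩ := fun t => rfl
  have hΦz₀ : ∀ t : T₀, Φ (z₀ * t) = ψ₀ t := by
    have h1 : Φ.comp (LinearMap.mulLeft O z₀) = ψ₀ := by
      apply ξ.injective
      rw [hΦmul, hz₀def]
    intro t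
    have h26 := LinearMap.congr_fun h1 t
    simpa using h26
  have hz₀f : z₀ * f = 0 := by
    have h1 : Φ.comp (LinearMap.mulLeft O (z₀ * f)) = Φ.comp (LinearMap.mulLeft O 0) := by
      apply LinearMap.ext
      intro t
      simp only [LinearMap.comp_apply, LinearMap.mulLeft_apply, zero_mul, map_zero]
      rw [mul_assoc, hΦz₀, hψ₀val]
      have hμft : (⟨μ (f * t), ⟨f * t, rfl⟩⟩ : ↥L') = 0 := Subtype.ext (by
        show μ (f * t) = (0 : T₀K)
        rw [hμ, map_mul]
        calc ι₀ f * ι₀ t * (1 - ε) = ι₀ t * (ι₀ f * (1 - ε)) := by ring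
          _ = 0 := by rw [hfε, mul_zero]
        )
      have h30 := congrArg ψ hμft
      rw [map_zero] at h30
      exact h30
    have h2 := congrArg ξ h1
    rw [hΦmul, hΦmul] at h2
    exact h2
  have hlz₀M3 : l0 z₀ ∈ M3 := (charM3 (l0 z₀)).mpr ⟨z₀, hz₀f, rfl⟩
  have hz₀te : z₀ * t_e = algebraMap O T₀ (l0 z₀) * t_e := by
    apply hι₀inj
    rw [map_mul, map_mul, hte]
    have h3 : e * ι₀ z₀ = algebraMap O T₀K (l0 z₀) * e := hemul z₀
    have e2 : ι₀ (algebraMap O T₀ (l0 z₀)) = algebraMap O T₀K (l0 z₀) :=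
      (IsScalarTower.algebraMap_apply O T₀ T₀K _).symm
    rw [e2]
    linear_combination algebraMap O T₀K a₀ * h3
  have hcomp : d = l0 z₀ * Φ t_e := by
    have h4 : Φ (z₀ * t_e) = l0 z₀ * Φ t_e := by
      rw [hz₀te]
      have h27 : algebraMap O T₀ (l0 z₀) * t_e = (l0 z₀) • t_e := (Algebra.smul_def _ _).symm
      rw [h27, map_smul, smul_eq_mul]
    have h5 : Φ (z₀ * t_e) = d := by
      rw [hΦz₀, hψ₀val]
      have h6 : (⟨μ t_e, ⟨t_e, rfl⟩⟩ : ↥L') = d • n₀ := by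
        apply Subtype.ext
        show μ t_e = (↑(d • n₀) : T₀K)
        have h28 : (↑(d • n₀) : T₀K) = d • (algebraMap O T₀K b₀ * e) := by simp [hn₀def]
        rw [h28, hμ, hte, Algebra.smul_def, ← hd, map_mul]
        linear_combination (algebraMap O T₀K d * algebraMap O T₀K b₀) * heme
      have h31 := congrArg ψ h6
      rw [map_smul, hψ, smul_eq_mul, mul_one] at h31
      exact h31
    rw [← h5]
    exact h4
  have hfinal : a₀ ∈ M2 * M3 := by
    have h29 : a₀ = b₀ * (Φ t_e * l0 z₀) := by rw [← hd, hcomp]; ring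
    rw [h29]
    have hb₀M2 : b₀ ∈ M2 := by rw [hb₀]; exact Submodule.mem_span_singleton_self b₀
    exact Ideal.mul_mem_mul hb₀M2 (Ideal.mul_mem_left _ _ hlz₀M3)
  have hhard : M1 ≤ M2 * M3 := by
    rw [ha₀]
    exact (Ideal.span_singleton_le_iff_mem _).mpr hfinal
  exact le_antisymm hhard heasy
end
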